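/- arXiv:0812.2263 — 2 statements merged into one kernel-verified Lean document; each statement's English description precedes it below -/
import Mathlib

section
/- In the ARW model with parameters 1/2 < β < 1 and 0 < r < ρ*(β), for every sequence of thresholds t_p ≥ 0 and every natural number m, (log p)^m · √p · Sep(t_p; ε_p, τ_p) → 0 as p → ∞. (Negative part of the Existence of Phases theorem: below the curve r = ρ*(β), even the ideal choice of threshold cannot send the normalized proxy separation to infinity.) -/
open Filter Set MeasureTheory

noncomputable def gaussPDF (t : ℝ) : ℝ := (Real.sqrt (2 * Real.pi))⁻¹ * Real.exp (-(t ^ 2) / 2)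

/-- standard normal CDF Φ -/
noncomputable def normCDF (t : ℝ) : ℝ := ∫ x in Set.Iic t, gaussPDF x

/-- survival function of |N(τ,1)| -/
noncomputable def psiBar (τ t : ℝ) : ℝ := (1 - normCDF (t - τ)) + normCDF (-t - τ)

noncomputable def tprFn (ε τ t : ℝ) : ℝ := ε * psiBar τ t

noncomputable def fprFn (ε t : ℝ) : ℝ := (1 - ε) * psiBar 0 t

noncomputable def idrFn (ε τ t : ℝ) : ℝ := ε * normCDF (-t - τ)

/-- clipping proxy separation -/
noncomputable def sepFn (ε τ t : ℝ) : ℝ :=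
  2 * τ * (tprFn ε τ t - 2 * idrFn ε τ t) / Real.sqrt (tprFn ε τ t + fprFn ε t)

/-- proxy false discovery rate -/
noncomputable def fdrFn (ε τ t : ℝ) : ℝ := fprFn ε t / (tprFn ε τ t + fprFn ε t)

/-- magnitude of derivative of TPR -/
noncomputable def tprD (ε τ t : ℝ) : ℝ := ε * (gaussPDF (t - τ) + gaussPDF (t + τ))

/-- magnitude of derivative of FPR -/
noncomputable def fprD (ε t : ℝ) : ℝ := 2 * (1 - ε) * gaussPDF t

/-- proxy local false discovery rate -/
noncomputable def lfdrFn (ε τ t : ℝ) : ℝ := fprD ε t / (tprD ε τ t + fprD ε t)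

noncomputable def rhoStar (β : ℝ) : ℝ :=
  if β ≤ 1 / 2 then 0 else if β ≤ 3 / 4 then β - 1 / 2 else (1 - Real.sqrt (1 - β)) ^ 2

noncomputable def qStar (r β : ℝ) : ℝ := if r ≤ β / 3 then 4 * r else (β + r) ^ 2 / (4 * r)

/-- sparsity ε_p = p^{-β} in the ARW model -/
noncomputable def epsP (β : ℝ) (p : ℕ) : ℝ := (p : ℝ) ^ (-β)

/-- strength τ_p = √(2 r log p) in the ARW model -/
noncomputable def tauP (r : ℝ) (p : ℕ) : ℝ := Real.sqrt (2 * r * Real.log p)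

/-- threshold t_p(q) = √(2 q log p) -/
noncomputable def tP (q : ℝ) (p : ℕ) : ℝ := Real.sqrt (2 * q * Real.log p)

/-- folded two-point mixture G_{ε,τ} -/
noncomputable def gMix (ε τ t : ℝ) : ℝ :=
  (1 - ε) * (normCDF t - normCDF (-t)) + ε * (normCDF (t - τ) - normCDF (-t - τ))

/-- ideal HC objective -/
noncomputable def hcObj (ε τ t : ℝ) : ℝ :=
  ((1 - gMix ε τ t) - psiBar 0 t) / Real.sqrt (gMix ε τ t * (1 - gMix ε τ t))

/-- useful feature discovery exponent δ(q) -/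
noncomputable def deltaExp (β r q : ℝ) : ℝ :=
  if q ≤ r then 1 - β else 1 - β - (Real.sqrt q - Real.sqrt r) ^ 2

/-- separation growth exponent γ(q) -/
noncomputable def gammaExp (β r q : ℝ) : ℝ :=
  deltaExp β r q - max (1 - q) (deltaExp β r q) / 2

/-!
Write `A = TPR`, `N = TPR - 2 IDR` and `D = TPR + FPR`, so that `Sep² = 4τ² N² / D` with
`0 ≤ N ≤ A ≤ D`. Hence `N² / D` is at most both `A` and `A² / FPR`, so at most
`A ^ (2 - l) * FPR ^ (l - 1)` for every `l ∈ [0, 1]`. Gaussian tail bounds give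
`A ≤ 2ε exp (-((t - τ)₊)² / 2)` and `FPR ≥ exp (-(t + 1)² / 2) / 6`; maximising the
resulting exponent over the threshold `t` yields, in the ARW model,
`p · Sep_p² ≤ p ^ (1 - (2 - l) β + (1 - l) (2 - l) r + o(1))` uniformly in `t`.
Below `ρ*(β)` some `l ∈ [0, 1]` makes this exponent negative, which beats every power of
`log p`.
-/

open Real Topology

lemma gaussPDF_eq_gaussianPDFReal : gaussPDF = ProbabilityTheory.gaussianPDFReal 0 1 := by
  ext x
  simp [gaussPDF, ProbabilityTheory.gaussianPDFReal, neg_div]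

lemma gaussPDF_pos (x : ℝ) : 0 < gaussPDF x := by
  rw [gaussPDF_eq_gaussianPDFReal]
  exact ProbabilityTheory.gaussianPDFReal_pos 0 1 x one_ne_zero

lemma integrable_gaussPDF : Integrable gaussPDF := by
  rw [gaussPDF_eq_gaussianPDFReal]
  exact ProbabilityTheory.integrable_gaussianPDFReal 0 1

lemma integral_gaussPDF : ∫ x, gaussPDF x = 1 := by
  rw [gaussPDF_eq_gaussianPDFReal]
  exact ProbabilityTheory.integral_gaussianPDFReal_eq_one 0 one_ne_zero

lemma gaussPDF_neg (x : ℝ) : gaussPDF (-x) = gaussPDF x := by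
  simp [gaussPDF]

lemma gaussPDF_le_of_sq_le {x y : ℝ} (h : x ^ 2 ≤ y ^ 2) : gaussPDF y ≤ gaussPDF x := by
  unfold gaussPDF
  gcongr

lemma exp_neg_sq_div_two_le_three_mul_gaussPDF (x : ℝ) : exp (-x ^ 2 / 2) ≤ 3 * gaussPDF x := by
  have hsqrt : √(2 * π) ≤ 3 := Real.sqrt_le_iff.2 ⟨by norm_num, by nlinarith [pi_le_four]⟩
  have hpos : 0 < √(2 * π) := by positivity
  rw [gaussPDF, ← mul_assoc, ← div_eq_mul_inv]
  exact le_mul_of_one_le_left (exp_nonneg _) ((one_le_div hpos).2 hsqrt)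

lemma normCDF_nonneg (t : ℝ) : 0 ≤ normCDF t :=
  setIntegral_nonneg measurableSet_Iic fun x _ => (gaussPDF_pos x).le

lemma normCDF_mono : Monotone normCDF := fun _ _ h =>
  setIntegral_mono_set integrable_gaussPDF.integrableOn
    (Eventually.of_forall fun x => (gaussPDF_pos x).le) (Iic_subset_Iic.2 h).eventuallyLE

lemma one_sub_normCDF (t : ℝ) : 1 - normCDF t = ∫ x in Ioi t, gaussPDF x := by
  rw [← integral_gaussPDF, ← intervalIntegral.integral_Iic_add_Ioi
    integrable_gaussPDF.integrableOn integrable_gaussPDF.integrableOn, normCDF,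
    add_sub_cancel_left]

lemma normCDF_neg (t : ℝ) : normCDF (-t) = 1 - normCDF t := by
  rw [one_sub_normCDF, normCDF, ← integral_comp_neg_Ioi]
  simp_rw [gaussPDF_neg]

lemma gaussPDF_add_one_le_one_sub_normCDF {t : ℝ} (ht : 0 ≤ t) :
    gaussPDF (t + 1) ≤ 1 - normCDF t := by
  rw [one_sub_normCDF]
  calc gaussPDF (t + 1) = gaussPDF (t + 1) * volume.real (Ioc t (t + 1)) := by simp
    _ ≤ ∫ x in Ioc t (t + 1), gaussPDF x :=
      setIntegral_ge_of_const_le_real measurableSet_Ioc measure_Ioc_lt_top.ne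
        (fun x hx => gaussPDF_le_of_sq_le (by nlinarith [hx.1, hx.2]))
        integrable_gaussPDF.integrableOn
    _ ≤ ∫ x in Ioi t, gaussPDF x :=
      setIntegral_mono_set integrable_gaussPDF.integrableOn
        (Eventually.of_forall fun x => (gaussPDF_pos x).le) Ioc_subset_Ioi_self.eventuallyLE

/-- Chernoff-type bound, from `φ(x) ≤ exp (-y²/2) φ(x - y)` for `0 ≤ y ≤ x`. -/
lemma integral_Ioi_gaussPDF_le {y : ℝ} (hy : 0 ≤ y) :
    ∫ x in Ioi y, gaussPDF x ≤ exp (-y ^ 2 / 2) := by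
  have hshift : ∀ x ∈ Ioi y, gaussPDF x ≤ exp (-y ^ 2 / 2) * gaussPDF (x - y) := by
    intro x hx
    rw [gaussPDF, gaussPDF, mul_left_comm, ← exp_add]
    gcongr
    nlinarith [hx.out]
  have hint : Integrable (fun x => exp (-y ^ 2 / 2) * gaussPDF (x - y)) :=
    (integrable_gaussPDF.comp_sub_right y).const_mul _
  calc ∫ x in Ioi y, gaussPDF x ≤ ∫ x in Ioi y, exp (-y ^ 2 / 2) * gaussPDF (x - y) :=
        setIntegral_mono_on integrable_gaussPDF.integrableOn hint.integrableOn measurableSet_Ioi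
          hshift
    _ ≤ ∫ x, exp (-y ^ 2 / 2) * gaussPDF (x - y) :=
        setIntegral_le_integral hint
          (Eventually.of_forall fun x => mul_nonneg (exp_nonneg _) (gaussPDF_pos _).le)
    _ = exp (-y ^ 2 / 2) := by
        rw [integral_const_mul, integral_sub_right_eq_self gaussPDF y, integral_gaussPDF, mul_one]

lemma one_sub_normCDF_le_exp (y : ℝ) : 1 - normCDF y ≤ exp (-max y 0 ^ 2 / 2) := by
  rcases le_total y 0 with hy | hy
  · simp [max_eq_right hy, normCDF_nonneg]
  · rw [max_eq_left hy, one_sub_normCDF]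
    exact integral_Ioi_gaussPDF_le hy

lemma psiBar_eq (τ t : ℝ) : psiBar τ t = (1 - normCDF (t - τ)) + (1 - normCDF (t + τ)) := by
  rw [psiBar, show -t - τ = -(t + τ) by ring, normCDF_neg]

lemma psiBar_le {τ : ℝ} (hτ : 0 ≤ τ) (t : ℝ) :
    psiBar τ t ≤ 2 * exp (-max (t - τ) 0 ^ 2 / 2) := by
  have hmax : max (t - τ) 0 ≤ max (t + τ) 0 := max_le_max_right 0 (by linarith)
  have hfar : exp (-max (t + τ) 0 ^ 2 / 2) ≤ exp (-max (t - τ) 0 ^ 2 / 2) :=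
    exp_le_exp.2 (by nlinarith [le_max_right (t - τ) 0])
  rw [psiBar_eq]
  linarith [one_sub_normCDF_le_exp (t - τ), one_sub_normCDF_le_exp (t + τ)]

lemma gaussPDF_add_one_le_psiBar_zero {t : ℝ} (ht : 0 ≤ t) :
    gaussPDF (t + 1) ≤ psiBar 0 t := by
  rw [psiBar, sub_zero]
  linarith [gaussPDF_add_one_le_one_sub_normCDF ht, normCDF_nonneg (-t - 0)]

lemma tprFn_sub_two_mul_idrFn (ε τ t : ℝ) :
    tprFn ε τ t - 2 * idrFn ε τ t = ε * (normCDF (t + τ) - normCDF (t - τ)) := by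
  rw [tprFn, idrFn, psiBar, show -t - τ = -(t + τ) by ring, normCDF_neg]
  ring

lemma tprFn_sub_two_mul_idrFn_nonneg {ε τ : ℝ} (hε : 0 ≤ ε) (hτ : 0 ≤ τ) (t : ℝ) :
    0 ≤ tprFn ε τ t - 2 * idrFn ε τ t := by
  rw [tprFn_sub_two_mul_idrFn]
  exact mul_nonneg hε (sub_nonneg.2 (normCDF_mono (by linarith)))

lemma sepFn_nonneg {ε τ : ℝ} (hε : 0 ≤ ε) (hτ : 0 ≤ τ) (t : ℝ) :
    0 ≤ sepFn ε τ t := by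
  have := tprFn_sub_two_mul_idrFn_nonneg hε hτ t
  rw [sepFn]
  positivity

/-- `N² / D ≤ min (A, A² / D) ≤ A ^ (2 - l) * D ^ (l - 1)`, on the exponential scale. -/
lemma sq_div_le_exp {N A D α ω l : ℝ} (hN : 0 ≤ N) (hNA : N ≤ A) (hAD : A ≤ D)
    (hA : A ≤ exp α) (hD : exp ω ≤ D) (hl0 : 0 ≤ l) (hl1 : l ≤ 1) :
    N ^ 2 / D ≤ exp ((2 - l) * α - (1 - l) * ω) := by
  have hD0 : 0 < D := (exp_pos ω).trans_le hD
  have hNA2 : N ^ 2 / D ≤ A ^ 2 / D := by gcongr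
  have hsmall : N ^ 2 / D ≤ exp α := by
    refine hNA2.trans ((div_le_iff₀ hD0).2 ?_)
    nlinarith
  have hlarge : N ^ 2 / D ≤ exp (2 * α - ω) := by
    rw [exp_sub, show 2 * α = α + α by ring, exp_add]
    exact hNA2.trans (div_le_div₀ (by positivity) (by nlinarith) (exp_pos ω) hD)
  rcases le_total α (2 * α - ω) with h | h
  · exact hsmall.trans (exp_le_exp.2 (by nlinarith))
  · exact hlarge.trans (exp_le_exp.2 (by nlinarith))

lemma quadratic_exponent_le {l a u : ℝ} (hl1 : l ≤ 1) (hu : 0 ≤ u) :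
    (1 - l) * (u + 1) ^ 2 - (2 - l) * max (u - a) 0 ^ 2 ≤ (1 - l) * (2 - l) * (a + 1) ^ 2 := by
  rcases le_total u a with h | h
  · rw [max_eq_right (by linarith)]
    have : (u + 1) ^ 2 ≤ (a + 1) ^ 2 := by gcongr
    nlinarith [mul_nonneg (sub_nonneg.2 hl1) (sq_nonneg (a + 1))]
  · rw [max_eq_left (by linarith)]
    nlinarith [sq_nonneg ((u + 1) - (2 - l) * (a + 1))]

lemma sq_sepFn_le {ε τ u l : ℝ} (hε0 : 0 < ε) (hε : ε ≤ 1 / 2) (hτ : 0 ≤ τ)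
    (hu : 0 ≤ u) (hl0 : 0 ≤ l) (hl1 : l ≤ 1) :
    sepFn ε τ u ^ 2
      ≤ 96 * τ ^ 2 * exp ((2 - l) * log ε + (1 - l) * (2 - l) * (τ + 1) ^ 2 / 2) := by
  set v := max (u - τ) 0
  have hN := tprFn_sub_two_mul_idrFn_nonneg hε0.le hτ u
  have hNA : tprFn ε τ u - 2 * idrFn ε τ u ≤ tprFn ε τ u := by
    have := mul_nonneg hε0.le (normCDF_nonneg (-u - τ))
    rw [idrFn]
    linarith
  have hA : tprFn ε τ u ≤ exp (log 2 + log ε - v ^ 2 / 2) := by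
    have : exp (log 2 + log ε - v ^ 2 / 2) = ε * (2 * exp (-v ^ 2 / 2)) := by
      rw [sub_eq_add_neg, exp_add, exp_add, exp_log two_pos, exp_log hε0, neg_div]
      ring
    rw [this, tprFn]
    exact mul_le_mul_of_nonneg_left (psiBar_le hτ u) hε0.le
  have hfpr : exp (-(u + 1) ^ 2 / 2 - log 6) ≤ fprFn ε u := by
    have h3 := exp_neg_sq_div_two_le_three_mul_gaussPDF (u + 1)
    have hpsi := gaussPDF_add_one_le_psiBar_zero hu
    have hhalf : psiBar 0 u / 2 ≤ (1 - ε) * psiBar 0 u := by nlinarith [gaussPDF_pos (u + 1)]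
    rw [exp_sub, exp_log (by norm_num), fprFn]
    linarith
  have hfpr0 : 0 ≤ fprFn ε u := (exp_pos _).le.trans hfpr
  have hinterp := sq_div_le_exp hN hNA (le_add_of_nonneg_right hfpr0) hA
    (hfpr.trans (le_add_of_nonneg_left (hN.trans hNA))) hl0 hl1
  have hq := quadratic_exponent_le (a := τ) hl1 hu
  have hlog : log 24 = 2 * log 2 + log 6 := by
    rw [show (24 : ℝ) = 2 ^ 2 * 6 by norm_num, log_mul (by norm_num) (by norm_num), log_pow]
    push_cast
    ring
  calc sepFn ε τ u ^ 2
      = 4 * τ ^ 2 * ((tprFn ε τ u - 2 * idrFn ε τ u) ^ 2 / (tprFn ε τ u + fprFn ε u)) := by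
        rw [sepFn, div_pow, sq_sqrt (by linarith)]
        ring
    _ ≤ 4 * τ ^ 2 *
          exp ((2 - l) * (log 2 + log ε - v ^ 2 / 2) - (1 - l) * (-(u + 1) ^ 2 / 2 - log 6)) := by
        gcongr
    _ ≤ 4 * τ ^ 2 *
          exp (log 24 + ((2 - l) * log ε + (1 - l) * (2 - l) * (τ + 1) ^ 2 / 2)) := by
        gcongr
        nlinarith [log_nonneg (show (1 : ℝ) ≤ 2 by norm_num),
          log_nonneg (show (1 : ℝ) ≤ 6 by norm_num)]
    _ = 96 * τ ^ 2 * exp ((2 - l) * log ε + (1 - l) * (2 - l) * (τ + 1) ^ 2 / 2) := by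
        rw [exp_add, exp_log (by norm_num)]
        ring

/-- For every `l ∈ [0, 1]`, `p · Sep_p² ≤ p ^ (sepExponent β r l + o(1))` uniformly in the
threshold. -/
def sepExponent (β r l : ℝ) : ℝ := 1 - (2 - l) * β + (1 - l) * (2 - l) * r

lemma exists_sepExponent_neg {β r : ℝ} (hβ1 : 1 / 2 < β) (hβ2 : β < 1) (hr1 : 0 < r)
    (hr2 : r < rhoStar β) : ∃ l ∈ Icc (0 : ℝ) 1, sepExponent β r l < 0 := by
  rw [rhoStar, if_neg (by linarith)] at hr2
  have hzero : sepExponent β r 0 = 1 - 2 * β + 2 * r := by rw [sepExponent]; ring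
  rcases le_or_gt β (3 / 4) with hβ34 | hβ34
  · rw [if_pos hβ34] at hr2
    exact ⟨0, ⟨le_rfl, zero_le_one⟩, by linarith⟩
  rw [if_neg (by linarith)] at hr2
  rcases le_or_gt (3 * r) β with h3r | h3r
  · exact ⟨0, ⟨le_rfl, zero_le_one⟩, by linarith⟩
  have hs := sq_sqrt (show 0 ≤ 1 - β by linarith)
  have hw := sq_sqrt hr1.le
  have hws : √r < 1 - √(1 - β) := by
    have h := sqrt_lt_sqrt hr1.le hr2
    rwa [sqrt_sq (by nlinarith [sqrt_nonneg (1 - β)])] at h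
  have hgap : 4 * r < (β + r) ^ 2 := by
    have : 0 < β + r - 2 * √r := by nlinarith [sqrt_nonneg (1 - β)]
    nlinarith [sqrt_nonneg r]
  -- This `l` minimises the quadratic `sepExponent β r`; its minimum is `1 - (β + r)² / (4 r)`.
  refine ⟨(3 * r - β) / (2 * r), ⟨div_nonneg (by linarith) (by positivity), ?_⟩, ?_⟩
  · rw [div_le_one (by positivity)]
    nlinarith [sqrt_nonneg (1 - β)]
  · have : sepExponent β r ((3 * r - β) / (2 * r)) = (4 * r - (β + r) ^ 2) / (4 * r) := by
      rw [sepExponent]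
      field_simp
      ring
    rw [this]
    exact div_neg_of_neg_of_pos (by linarith) (by positivity)

lemma natCast_mul_sq_sepFn_le {β r l : ℝ} (hβ : 1 / 2 ≤ β) (hr : 0 ≤ r) (hl0 : 0 ≤ l)
    (hl1 : l ≤ 1) {p : ℕ} (hp : 4 ≤ p) {u : ℝ} (hu : 0 ≤ u) :
    (p : ℝ) * sepFn (epsP β p) (tauP r p) u ^ 2
      ≤ 192 * r * log p * exp (sepExponent β r l * log p + 2 * tauP r p + 1) := by
  have hp0 : (0 : ℝ) < p := by positivity
  set L := log (p : ℝ)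
  set τ := tauP r p
  have hlog4 : 2 * log 2 ≤ L := by
    rw [← log_rpow two_pos, show (2 : ℝ) ^ (2 : ℝ) = 4 by norm_num]
    exact log_le_log (by norm_num) (by exact_mod_cast hp)
  have hε : epsP β p = exp (-β * L) := by
    rw [epsP, rpow_def_of_pos hp0, mul_comm]
  have hε_half : epsP β p ≤ 1 / 2 := by
    calc epsP β p = exp (-β * L) := hε
      _ ≤ exp (-log 2) :=
        exp_le_exp.2 (by nlinarith [log_nonneg (show (1 : ℝ) ≤ 2 by norm_num)])
      _ = 1 / 2 := by rw [exp_neg, exp_log two_pos, one_div]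
  have hτ2 : τ ^ 2 = 2 * r * L := sq_sqrt (by positivity)
  have hτ : 0 ≤ τ := sqrt_nonneg _
  have hsep := sq_sepFn_le (hε ▸ exp_pos _) hε_half hτ hu hl0 hl1
  rw [hε, log_exp] at hsep
  rw [hε]
  have hll : (1 - l) * (2 - l) ≤ 2 := by nlinarith
  have hexp : L + ((2 - l) * (-β * L) + (1 - l) * (2 - l) * (τ + 1) ^ 2 / 2)
      ≤ sepExponent β r l * L + 2 * τ + 1 := by
    have : (τ + 1) ^ 2 = 2 * r * L + (2 * τ + 1) := by rw [add_sq, hτ2]; ring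
    rw [this, sepExponent]
    have h2l : (0 : ℝ) ≤ 2 - l := by linarith
    nlinarith [mul_nonneg (mul_nonneg (sub_nonneg.2 hl1) h2l) (by linarith : 0 ≤ 2 * τ + 1)]
  calc (p : ℝ) * sepFn (exp (-β * L)) τ u ^ 2
      ≤ exp L *
          (96 * τ ^ 2 * exp ((2 - l) * (-β * L) + (1 - l) * (2 - l) * (τ + 1) ^ 2 / 2)) := by
        rw [exp_log hp0]
        gcongr
    _ = 192 * r * L * exp (L + ((2 - l) * (-β * L) + (1 - l) * (2 - l) * (τ + 1) ^ 2 / 2)) := by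
        rw [hτ2, exp_add L]
        ring
    _ ≤ 192 * r * L * exp (sepExponent β r l * L + 2 * τ + 1) := by
        gcongr

lemma two_mul_tauP_le {r η : ℝ} (hr : 0 ≤ r) (hη : 0 < η) (p : ℕ) :
    2 * tauP r p ≤ η / 2 * log p + 4 * r / η := by
  have hL := log_natCast_nonneg p
  have hsplit : tauP r p = √(η / 2 * log p) * √(4 * r / η) := by
    rw [tauP, ← sqrt_mul (by positivity)]
    congr 1
    field_simp
    ring
  calc 2 * tauP r p = 2 * √(η / 2 * log p) * √(4 * r / η) := by rw [hsplit, mul_assoc]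
    _ ≤ √(η / 2 * log p) ^ 2 + √(4 * r / η) ^ 2 := two_mul_le_add_sq _ _
    _ = η / 2 * log p + 4 * r / η := by rw [sq_sqrt (by positivity), sq_sqrt (by positivity)]

lemma sq_log_pow_mul_sqrt_mul_sepFn_le {β r l η : ℝ} (hβ : 1 / 2 ≤ β) (hr : 0 ≤ r)
    (hl0 : 0 ≤ l) (hl1 : l ≤ 1) (hη : 0 < η) (hexp : sepExponent β r l ≤ -η) (m : ℕ)
    {p : ℕ} (hp : 4 ≤ p) {u : ℝ} (hu : 0 ≤ u) :
    (log p ^ m * (√p * sepFn (epsP β p) (tauP r p) u)) ^ 2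
      ≤ 192 * r * exp (4 * r / η + 1) * (log p ^ (2 * m + 1) * exp (-(η / 2) * log p)) := by
  have hL := log_natCast_nonneg p
  have hsep := natCast_mul_sq_sepFn_le hβ hr hl0 hl1 hp hu
  have hτ := two_mul_tauP_le hr hη p
  calc (log p ^ m * (√p * sepFn (epsP β p) (tauP r p) u)) ^ 2
      = log p ^ (2 * m) * (p * sepFn (epsP β p) (tauP r p) u ^ 2) := by
        rw [mul_pow, mul_pow, sq_sqrt (Nat.cast_nonneg p), ← pow_mul, mul_comm m]
    _ ≤ log p ^ (2 * m) *
          (192 * r * log p * exp (sepExponent β r l * log p + 2 * tauP r p + 1)) := by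
        gcongr
    _ ≤ log p ^ (2 * m) * (192 * r * log p * exp (4 * r / η + 1 + -(η / 2) * log p)) := by
        gcongr log p ^ (2 * m) * (192 * r * log p * exp ?_)
        nlinarith
    _ = 192 * r * exp (4 * r / η + 1) * (log p ^ (2 * m + 1) * exp (-(η / 2) * log p)) := by
        rw [exp_add]
        ring

lemma tendsto_sqrt_const_mul_log_pow_mul_exp (C : ℝ) {b : ℝ} (hb : 0 < b) (k : ℕ) :
    Tendsto (fun p : ℕ => √(C * (log p ^ k * exp (-b * log p)))) atTop (𝓝 0) := by
  have h := (((tendsto_rpow_mul_exp_neg_mul_atTop_nhds_zero k b hb).comp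
    (tendsto_log_atTop.comp tendsto_natCast_atTop_atTop)).const_mul C).sqrt
  simpa only [mul_zero, sqrt_zero, Function.comp, rpow_natCast] using h

/-- Negative part of Existence of Phases: below r = ρ*(β) no sequence of thresholds
can make the normalized proxy separation tend to infinity; indeed it tends to 0
even after multiplying by any power of log p. -/
theorem stmt1 (β r : ℝ) (hβ1 : 1 / 2 < β) (hβ2 : β < 1)
    (hr1 : 0 < r) (hr2 : r < rhoStar β)
    (t : ℕ → ℝ) (ht : ∀ p, 0 ≤ t p) (m : ℕ) :
    Filter.Tendsto
      (fun p : ℕ =>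
        (Real.log p) ^ m * (Real.sqrt p * sepFn (epsP β p) (tauP r p) (t p)))
      Filter.atTop (nhds 0) := by
  obtain ⟨l, ⟨hl0, hl1⟩, hneg⟩ := exists_sepExponent_neg hβ1 hβ2 hr1 hr2
  set η := -sepExponent β r l with hη_def
  have hη : 0 < η := neg_pos.2 hneg
  refine squeeze_zero' (Eventually.of_forall fun p => ?_) ?_
    (tendsto_sqrt_const_mul_log_pow_mul_exp (192 * r * exp (4 * r / η + 1)) (half_pos hη)
      (2 * m + 1))
  · have := sepFn_nonneg (rpow_nonneg (Nat.cast_nonneg p) (-β))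
      (sqrt_nonneg (2 * r * log p)) (t p)
    have := log_natCast_nonneg p
    positivity
  · filter_upwards [eventually_ge_atTop 4] with p hp
    exact (le_abs_self _).trans (abs_le_sqrt (sq_log_pow_mul_sqrt_mul_sepFn_le hβ1.le hr1.le
      hl0 hl1 hη (by rw [hη_def, neg_neg]) m hp (ht p)))
end

section
/- (Maximin characterization of the phase boundary.) For 0 < β < 1 and 0 < r < 1 define δ(q) = 1−β for 0 ≤ q ≤ r and δ(q) = 1−β−(√q−√r)² for q > r, and set γ(q) = δ(q) − max(1−q, δ(q))/2. Then for 1/2 < β < 1 and 0 < r < 1: (i) sup_{q ∈ [0,1]} γ(q) > 0 if and only if r > ρ*(β); and (ii) if r > ρ*(β), then γ(q*(r,β)) = sup_{q ∈ [0,1]} γ(q), i.e. q* = 4r (if r ≤ β/3) or q* = (β+r)²/(4r) (if r > β/3) attains the maximum. -/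
open Filter Set MeasureTheory

/-!
Write `a = √r`, `u = √(1 - β)` and `s = √q`. Then `γ = min A (δ / 2)` with `A = δ - (1 - q) / 2`,
where `A = 1/2 - β + r - (s - 2a)² / 2` for `q > r` and `A = 1/2 - β + q/2` for `q ≤ r`. So `A`
increases up to its peak `1/2 - β + r` at `q = 4r`, while `δ` is nonincreasing. Hence `γ` is maximal
at the peak of `A` if `δ/2` still lies above it there (`3r ≤ β`), on the plateau of `δ` where
`A ≥ δ / 2` (`β ≤ r`), and otherwise at the crossing `δ(q) = 1 - q`, whose root is
`s = (β + r) / (2a)`. Comparing the maximal value with `0` in each regime gives the boundary `ρ*`.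
-/

open Real

theorem min_le_of_monotoneOn_of_antitoneOn {α β : Type*} [LinearOrder α] [LinearOrder β]
    {f g : α → β} {x : α} (hf : MonotoneOn f (Iic x)) (hg : AntitoneOn g (Ici x))
    (hfg : f x = g x) (y : α) : min (f y) (g y) ≤ f x := by
  rcases le_total y x with h | h
  · exact (min_le_left _ _).trans (hf (mem_Iic.2 h) self_mem_Iic h)
  · exact (min_le_right _ _).trans (hfg ▸ hg self_mem_Ici (mem_Ici.2 h) h)

section Exponents

variable {β r q : ℝ}

lemma deltaExp_of_le (h : q ≤ r) : deltaExp β r q = 1 - β := if_pos h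

lemma deltaExp_of_lt (h : r < q) : deltaExp β r q = 1 - β - (√q - √r) ^ 2 := if_neg h.not_ge

lemma deltaExp_le : deltaExp β r q ≤ 1 - β := by
  unfold deltaExp
  split_ifs <;> nlinarith [sq_nonneg (√q - √r)]

lemma deltaExp_antitone : Antitone (deltaExp β r) := by
  intro p q hpq
  rcases le_or_gt q r with hqr | hrq
  · rw [deltaExp_of_le hqr, deltaExp_of_le (hpq.trans hqr)]
  rcases le_or_gt p r with hpr | hrp
  · rw [deltaExp_of_le hpr]
    exact deltaExp_le
  rw [deltaExp_of_lt hrq, deltaExp_of_lt hrp]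
  have hrp' : √r ≤ √p := sqrt_le_sqrt hrp.le
  have hpq' : √p ≤ √q := sqrt_le_sqrt hpq
  nlinarith

lemma gammaExp_eq_min :
    gammaExp β r q = min (deltaExp β r q - (1 - q) / 2) (deltaExp β r q / 2) := by
  unfold gammaExp
  rcases le_total (1 - q) (deltaExp β r q) with h | h
  · rw [max_eq_right h, min_eq_right (by linarith)]
    ring
  · rw [max_eq_left h, min_eq_left (by linarith)]

lemma deltaExp_sub_eq_of_lt (hr : 0 ≤ r) (h : r < q) :
    deltaExp β r q - (1 - q) / 2 = 1 / 2 - β + r - (√q - 2 * √r) ^ 2 / 2 := by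
  rw [deltaExp_of_lt h]
  linear_combination (-1 / 2 : ℝ) * sq_sqrt (hr.trans h.le) + sq_sqrt hr

lemma sqrt_four_mul (hr : 0 ≤ r) : √(4 * r) = 2 * √r := by
  rw [sqrt_mul' _ hr, show (4 : ℝ) = 2 ^ 2 by norm_num, sqrt_sq zero_le_two]

lemma deltaExp_sub_le (hr : 0 ≤ r) : deltaExp β r q - (1 - q) / 2 ≤ 1 / 2 - β + r := by
  rcases le_or_gt q r with hqr | hrq
  · rw [deltaExp_of_le hqr]
    linarith
  · rw [deltaExp_sub_eq_of_lt hr hrq]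
    nlinarith [sq_nonneg (√q - 2 * √r)]

lemma monotoneOn_deltaExp_sub (hr : 0 ≤ r) :
    MonotoneOn (fun q ↦ deltaExp β r q - (1 - q) / 2) (Iic (4 * r)) := by
  intro p _ q hq hpq
  have hq' : √q ≤ 2 * √r := sqrt_four_mul hr ▸ sqrt_le_sqrt (mem_Iic.1 hq)
  dsimp only
  rcases le_or_gt q r with hqr | hrq
  · rw [deltaExp_of_le hqr, deltaExp_of_le (hpq.trans hqr)]
    linarith
  have hrq' : √r ≤ √q := sqrt_le_sqrt hrq.le
  rw [deltaExp_sub_eq_of_lt hr hrq]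
  rcases le_or_gt p r with hpr | hrp
  · rw [deltaExp_of_le hpr]
    nlinarith [sq_sqrt hr]
  · have hrp' : √r ≤ √p := sqrt_le_sqrt hrp.le
    have hpq' : √p ≤ √q := sqrt_le_sqrt hpq
    rw [deltaExp_sub_eq_of_lt hr hrp]
    nlinarith

end Exponents

section Optimum

variable {β r : ℝ}

lemma qStar_of_third_lt (h : β / 3 < r) : qStar r β = (β + r) ^ 2 / (4 * r) :=
  if_neg (not_le.2 h)

lemma qStar_nonneg (hr : 0 ≤ r) : 0 ≤ qStar r β := by
  unfold qStar
  split_ifs <;> positivity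

lemma gammaExp_qStar_of_le_third (hr : 0 < r) (h : r ≤ β / 3) :
    gammaExp β r (qStar r β) = 1 / 2 - β + r := by
  have hA : deltaExp β r (4 * r) - (1 - 4 * r) / 2 = 1 / 2 - β + r := by
    rw [deltaExp_sub_eq_of_lt hr.le (by linarith), sqrt_four_mul hr.le]
    ring
  have hδ : deltaExp β r (4 * r) = 1 - β - r := by linarith
  rw [show qStar r β = 4 * r from if_pos h, gammaExp_eq_min, hA, hδ, min_eq_left (by linarith)]

lemma qStar_le_of_le (hβ : 0 ≤ β) (h3 : β / 3 < r) (h : β ≤ r) : qStar r β ≤ r := by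
  rw [qStar_of_third_lt h3, div_le_iff₀ (by linarith)]
  nlinarith

lemma gammaExp_qStar_of_le (hβ : 0 ≤ β) (h3 : β / 3 < r) (h : β ≤ r) :
    gammaExp β r (qStar r β) = (1 - β) / 2 := by
  have hr : 0 < r := by linarith
  have hle : qStar r β ≤ r := qStar_le_of_le hβ h3 h
  have hge : β ≤ qStar r β := by
    rw [qStar_of_third_lt h3, le_div_iff₀ (by positivity)]
    nlinarith [sq_nonneg (β - r)]
  rw [gammaExp_eq_min, deltaExp_of_le hle, min_eq_right (by linarith)]

lemma sqrt_qStar_of_third_lt (h3 : β / 3 < r) (h : r < β) :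
    √(qStar r β) = (β + r) / (2 * √r) := by
  have hr : 0 < r := by linarith
  have hsq : (β + r) ^ 2 / (4 * r) = ((β + r) / (2 * √r)) ^ 2 := by
    rw [div_pow, mul_pow, sq_sqrt hr.le]
    norm_num
  rw [qStar_of_third_lt h3, hsq, sqrt_sq (div_nonneg (by linarith) (by positivity))]

lemma lt_qStar_of_third_lt (h3 : β / 3 < r) (h : r < β) : r < qStar r β := by
  have hr : 0 < r := by linarith
  rw [qStar_of_third_lt h3, lt_div_iff₀ (by positivity)]
  nlinarith

lemma qStar_le_four_mul (h3 : β / 3 < r) (h : r < β) : qStar r β ≤ 4 * r := by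
  have hr : 0 < r := by linarith
  rw [qStar_of_third_lt h3, div_le_iff₀ (by positivity)]
  nlinarith

lemma deltaExp_qStar_of_third_lt (h3 : β / 3 < r) (h : r < β) :
    deltaExp β r (qStar r β) = 1 - qStar r β := by
  have hr : 0 < r := by linarith
  have ha : 0 < √r := sqrt_pos.2 hr
  rw [deltaExp_of_lt (lt_qStar_of_third_lt h3 h), sqrt_qStar_of_third_lt h3 h,
    qStar_of_third_lt h3]
  field_simp
  rw [sq_sqrt hr.le]
  ring

lemma gammaExp_qStar_of_third_lt (h3 : β / 3 < r) (h : r < β) :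
    gammaExp β r (qStar r β) = (1 - qStar r β) / 2 := by
  rw [gammaExp_eq_min, deltaExp_qStar_of_third_lt h3 h, min_eq_right (by linarith)]

theorem gammaExp_le_gammaExp_qStar (hβ : 0 ≤ β) (hr : 0 < r) (q : ℝ) :
    gammaExp β r q ≤ gammaExp β r (qStar r β) := by
  rw [gammaExp_eq_min]
  rcases le_or_gt r (β / 3) with h3 | h3
  · rw [gammaExp_qStar_of_le_third hr h3]
    exact (min_le_left _ _).trans (deltaExp_sub_le hr.le)
  rcases le_or_gt β r with h | h
  · rw [gammaExp_qStar_of_le hβ h3 h]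
    exact (min_le_right _ _).trans (by linarith [deltaExp_le (β := β) (r := r) (q := q)])
  · have hcross :
        deltaExp β r (qStar r β) - (1 - qStar r β) / 2 = deltaExp β r (qStar r β) / 2 := by
      rw [deltaExp_qStar_of_third_lt h3 h]
      ring
    rw [gammaExp_eq_min, ← hcross, min_self]
    refine min_le_of_monotoneOn_of_antitoneOn (f := fun q ↦ deltaExp β r q - (1 - q) / 2)
      (g := fun q ↦ deltaExp β r q / 2) ?_ ?_ hcross q
    · exact (monotoneOn_deltaExp_sub hr.le).mono (Iic_subset_Iic.2 (qStar_le_four_mul h3 h))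
    · exact fun p _ q _ hpq ↦ by linarith [deltaExp_antitone (β := β) (r := r) hpq]

end Optimum

section PhaseBoundary

variable {β r : ℝ}

lemma rhoStar_lt_self (hβ1 : 1 / 2 < β) (hβ2 : β < 1) : rhoStar β < β := by
  have hu : √(1 - β) ^ 2 = 1 - β := sq_sqrt (by linarith)
  have hu0 : 0 < √(1 - β) := sqrt_pos.2 (by linarith)
  rw [rhoStar, if_neg (by linarith)]
  split_ifs
  · linarith
  · nlinarith

lemma rhoStar_lt_iff_of_le_third (hβ1 : 1 / 2 < β) (hβ2 : β ≤ 1) (h : r ≤ β / 3) :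
    rhoStar β < r ↔ β - 1 / 2 < r := by
  rw [rhoStar, if_neg (by linarith)]
  split_ifs with h34
  · rfl
  have hu : √(1 - β) ^ 2 = 1 - β := sq_sqrt (by linarith)
  have hu1 : √(1 - β) ≤ 1 / 2 := by nlinarith [sqrt_nonneg (1 - β)]
  have hρ : β / 3 ≤ (1 - √(1 - β)) ^ 2 := by nlinarith
  constructor <;> intro <;> linarith

lemma rhoStar_lt_iff_of_third_lt (hβ1 : 1 / 2 < β) (h : β / 3 < r) :
    rhoStar β < r ↔ (1 - √(1 - β)) ^ 2 < r := by
  rw [rhoStar, if_neg (by linarith)]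
  split_ifs with h34
  · have hu : √(1 - β) ^ 2 = 1 - β := sq_sqrt (by linarith)
    have hu1 : 1 / 2 ≤ √(1 - β) := by nlinarith [sqrt_nonneg (1 - β)]
    have hρ : (1 - √(1 - β)) ^ 2 ≤ β / 3 := by nlinarith
    constructor <;> intro <;> linarith
  · rfl

lemma qStar_lt_one_iff (hβ : β ≤ 1) (h3 : β / 3 < r) (h : r < β) :
    qStar r β < 1 ↔ (1 - √(1 - β)) ^ 2 < r := by
  have hr : 0 < r := by linarith
  have ha : √r ^ 2 = r := sq_sqrt hr.le
  have hu : √(1 - β) ^ 2 = 1 - β := sq_sqrt (by linarith)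
  have ha1 : √r ≤ 1 := sqrt_le_one.2 (by linarith)
  have hu1 : √(1 - β) ≤ 1 := sqrt_le_one.2 (by linarith)
  rw [qStar_of_third_lt h3, div_lt_one (by positivity)]
  calc (β + r) ^ 2 < 4 * r ↔ (β + r) ^ 2 < (2 * √r) ^ 2 := by rw [mul_pow, ha]; norm_num
    _ ↔ (1 - √r) ^ 2 < √(1 - β) ^ 2 := by
      rw [sq_lt_sq₀ (by linarith) (by positivity)]
      constructor <;> intro <;> nlinarith
    _ ↔ 1 - √(1 - β) < √r := by
      rw [sq_lt_sq₀ (by linarith) (sqrt_nonneg _)]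
      constructor <;> intro <;> linarith
    _ ↔ (1 - √(1 - β)) ^ 2 < r := by rw [← sq_lt_sq₀ (by linarith) (sqrt_nonneg r), ha]

theorem gammaExp_qStar_pos_iff (hβ1 : 1 / 2 < β) (hβ2 : β < 1) (hr : 0 < r) :
    0 < gammaExp β r (qStar r β) ↔ rhoStar β < r := by
  rcases le_or_gt r (β / 3) with h3 | h3
  · rw [gammaExp_qStar_of_le_third hr h3, rhoStar_lt_iff_of_le_third hβ1 hβ2.le h3]
    constructor <;> intro <;> linarith
  rcases le_or_gt β r with h | h
  · rw [gammaExp_qStar_of_le (by linarith) h3 h]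
    exact iff_of_true (by linarith) ((rhoStar_lt_self hβ1 hβ2).trans_le h)
  · rw [gammaExp_qStar_of_third_lt h3 h, rhoStar_lt_iff_of_third_lt hβ1 h3,
      ← qStar_lt_one_iff hβ2.le h3 h]
    constructor <;> intro <;> linarith

theorem qStar_le_one (hβ1 : 1 / 2 < β) (hβ2 : β ≤ 1) (hr1 : r < 1) (h : rhoStar β < r) :
    qStar r β ≤ 1 := by
  rcases le_or_gt r (β / 3) with h3 | h3
  · rw [rhoStar_lt_iff_of_le_third hβ1 hβ2 h3] at h
    rw [show qStar r β = 4 * r from if_pos h3]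
    linarith
  rcases le_or_gt β r with hβr | hβr
  · linarith [qStar_le_of_le (by linarith) h3 hβr]
  · rw [rhoStar_lt_iff_of_third_lt hβ1 h3, ← qStar_lt_one_iff hβ2 h3 hβr] at h
    exact h.le

end PhaseBoundary

/-- Maximin characterization of the phase boundary: γ takes a positive value
on [0,1] iff r > ρ*(β), in which case q*(r,β) attains the maximum of γ on [0,1]. -/
theorem stmt11 (β r : ℝ) (hβ1 : 1 / 2 < β) (hβ2 : β < 1) (hr1 : 0 < r) (hr2 : r < 1) :
    ((∃ q ∈ Set.Icc (0 : ℝ) 1, 0 < gammaExp β r q) ↔ rhoStar β < r) ∧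
    (rhoStar β < r →
      qStar r β ∈ Set.Icc (0 : ℝ) 1 ∧
        ∀ q ∈ Set.Icc (0 : ℝ) 1, gammaExp β r q ≤ gammaExp β r (qStar r β)) := by
  have hmax : ∀ q ∈ Icc (0 : ℝ) 1, gammaExp β r q ≤ gammaExp β r (qStar r β) :=
    fun q _ ↦ gammaExp_le_gammaExp_qStar (by linarith) hr1 q
  have hmem : rhoStar β < r → qStar r β ∈ Icc (0 : ℝ) 1 :=
    fun h ↦ ⟨qStar_nonneg hr1.le, qStar_le_one hβ1 hβ2.le hr2 h⟩
  have hpos := gammaExp_qStar_pos_iff hβ1 hβ2 hr1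
  refine ⟨⟨fun ⟨q, hq, hγ⟩ ↦ hpos.1 (hγ.trans_le (hmax q hq)), fun h ↦ ⟨_, hmem h, hpos.2 h⟩⟩,
    fun h ↦ ⟨hmem h, hmax⟩⟩
end
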